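/- Let F(x,y) = (−(x − s(y))/2 + (√3/2)y, −(√3/2)(x − s(y)) − y/2). For all k,ℓ ∈ ℤ, consider the triangle centers q_{k,ℓ} = (2k+ℓ+1/2, √3(ℓ+1/6)) and r_{k,ℓ} = (2k+ℓ+5/2, √3(ℓ+5/6)). The value of the first integral V at q_{k,ℓ} (namely V_{k,ℓ,k+ℓ} = max(|2k|, |2k+2ℓ+1|−1, |2ℓ|)) and at r_{k,ℓ} (namely V_{k,ℓ,k+ℓ+2} = max(|2k+2|, |2k+2ℓ+3|−1, |2ℓ+2|)) is an even natural number; and for each such center, writing c for this value, the minimal period of the center under F equals 3c+1. -/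

import Mathlib

noncomputable def s (y : ℝ) : ℝ := if 0 ≤ y then 1 else -1

/-- The map `F_α` of the paper for `α = 2π/3`. -/
noncomputable def F (q : ℝ × ℝ) : ℝ × ℝ :=
  (-(q.1 - s q.2) / 2 + (Real.sqrt 3 / 2) * q.2,
   -(Real.sqrt 3 / 2) * (q.1 - s q.2) - q.2 / 2)

/-- The triangle center `q_{k,ℓ}` (tile `T_{k,ℓ,k+ℓ}`). -/
noncomputable def qc (k ℓ : ℤ) : ℝ × ℝ :=
  (2 * (k : ℝ) + ℓ + 1/2, Real.sqrt 3 * ((ℓ : ℝ) + 1/6))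

/-- The triangle center `r_{k,ℓ}` (tile `T_{k,ℓ,k+ℓ+2}`). -/
noncomputable def rc (k ℓ : ℤ) : ℝ × ℝ :=
  (2 * (k : ℝ) + ℓ + 5/2, Real.sqrt 3 * ((ℓ : ℝ) + 5/6))

/-- Value of the first integral on the tile `T_{k,ℓ,m}`. -/
def Vt (k ℓ m : ℤ) : ℤ :=
  max (max (|k - ℓ + m|) (|k + ℓ + m + 1| - 1)) (|-k + ℓ + m|)

/-! ### Auxiliary integer dynamics -/

/-- Induced map on the indices of the `q`-centers. -/
def Gh (p : ℤ × ℤ) : ℤ × ℤ :=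
  (p.2, if 0 ≤ p.2 then -p.1 - p.2 else -p.1 - p.2 - 1)

/-- Induced map on the indices of the `r`-centers. -/
def Ghr (p : ℤ × ℤ) : ℤ × ℤ :=
  (p.2, if 0 ≤ p.2 then -p.1 - p.2 - 2 else -p.1 - p.2 - 3)

/-- The conjugating involution between `Ghr` and `Gh`. -/
def Sc (p : ℤ × ℤ) : ℤ × ℤ := (-p.1 - 1, -p.2 - 1)

/-- `p` lies on the level-`n` "hexagon" of the invariant for `q`-centers. -/
def lev (n : ℤ) (p : ℤ × ℤ) : Prop :=
  -n ≤ p.1 ∧ p.1 ≤ n ∧ -n ≤ p.2 ∧ p.2 ≤ n ∧ -n - 1 ≤ p.1 + p.2 ∧ p.1 + p.2 ≤ n ∧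
    (p.1 = n ∨ p.1 = -n ∨ p.2 = n ∨ p.2 = -n ∨ p.1 + p.2 = n ∨ p.1 + p.2 = -n - 1)

/-- Position of a level-`n` point along the hexagonal cycle. -/
def hh (n : ℤ) (p : ℤ × ℤ) : ℤ :=
  if 0 ≤ p.2 ∧ p.1 + p.2 = n then p.2
  else if p.2 = n then n - p.1
  else if p.1 = -n then 3 * n - p.2
  else if p.2 = -n ∨ p.1 + p.2 = -n - 1 then p.1 + 4 * n + 1
  else p.2 + 6 * n + 1

/-- Level `n` for a pair `(k,ℓ)`. -/
def nq (k ℓ : ℤ) : ℤ :=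
  max (max |k| |ℓ|) (if 0 ≤ k + ℓ then k + ℓ else -(k + ℓ) - 1)

lemma lev_nq (k ℓ : ℤ) : lev (nq k ℓ) (k, ℓ) := by
  simp only [lev, nq, Int.abs_eq_natAbs, max_def]
  split_ifs <;> omega

lemma nq_nonneg {n : ℤ} {p : ℤ × ℤ} (h : lev n p) : 0 ≤ n := by
  obtain ⟨h1, h2, -⟩ := h; omega

lemma nq_Vt (k ℓ : ℤ) : 2 * nq k ℓ = Vt k ℓ (k + ℓ) := by
  simp only [nq, Vt, Int.abs_eq_natAbs, max_def]
  split_ifs <;> omega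

lemma nq_Vt' (k ℓ : ℤ) : 2 * nq (-k - 1) (-ℓ - 1) = Vt k ℓ (k + ℓ + 2) := by
  simp only [nq, Vt, Int.abs_eq_natAbs, max_def]
  split_ifs <;> omega

lemma lev_Gh {n : ℤ} {p : ℤ × ℤ} (h : lev n p) : lev n (Gh p) := by
  obtain ⟨k, l⟩ := p
  simp only [lev, Gh] at *
  split_ifs <;> omega

lemma hh_range {n : ℤ} {p : ℤ × ℤ} (h : lev n p) : 0 ≤ hh n p ∧ hh n p ≤ 6 * n := by
  obtain ⟨k, l⟩ := p
  simp only [lev, hh] at *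
  split_ifs <;> omega

lemma hh_step {n : ℤ} {p : ℤ × ℤ} (h : lev n p) :
    hh n (Gh p) = hh n p + 4 * n + 1 ∨ hh n (Gh p) = hh n p - 2 * n := by
  obtain ⟨k, l⟩ := p
  simp only [lev, hh, Gh] at *
  split_ifs <;> omega

lemma hh_inj {n : ℤ} {p q : ℤ × ℤ} (hp : lev n p) (hq : lev n q)
    (h : hh n p = hh n q) : p = q := by
  obtain ⟨k, l⟩ := p
  obtain ⟨k', l'⟩ := q
  simp only [lev, hh, Prod.mk.injEq] at *
  split_ifs at h <;> omega

lemma key {n : ℤ} {p : ℤ × ℤ} (hp : lev n p) (m : ℕ) :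
    lev n (Gh^[m] p) ∧
      (6 * n + 1) ∣ (hh n (Gh^[m] p) - (hh n p + (m : ℤ) * (4 * n + 1))) := by
  induction m with
  | zero => exact ⟨hp, ⟨0, by simp⟩⟩
  | succ m ih =>
    obtain ⟨hlev, c, hc⟩ := ih
    rw [Function.iterate_succ_apply']
    refine ⟨lev_Gh hlev, ?_⟩
    rcases hh_step hlev with h | h
    · exact ⟨c, by push_cast; push_cast at hc; linear_combination hc + h⟩
    · exact ⟨c - 1, by push_cast; push_cast at hc; linear_combination hc + h⟩

lemma Gh_periodic {n : ℤ} {p : ℤ × ℤ} (hp : lev n p) :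
    Gh^[(6 * n + 1).toNat] p = p := by
  have hn0 : 0 ≤ n := nq_nonneg hp
  obtain ⟨hlev, hd⟩ := key hp (6 * n + 1).toNat
  have hcast : (((6 * n + 1).toNat : ℕ) : ℤ) = 6 * n + 1 := Int.toNat_of_nonneg (by omega)
  rw [hcast] at hd
  have hd2 : (6 * n + 1) ∣ (hh n (Gh^[(6 * n + 1).toNat] p) - hh n p) := by
    have heq : hh n (Gh^[(6 * n + 1).toNat] p) - hh n p =
        (hh n (Gh^[(6 * n + 1).toNat] p) - (hh n p + (6 * n + 1) * (4 * n + 1))) +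
          (6 * n + 1) * (4 * n + 1) := by ring
    rw [heq]
    exact dvd_add hd (dvd_mul_right _ _)
  have h1 := hh_range hlev
  have h2 := hh_range hp
  have h0 := Int.eq_zero_of_abs_lt_dvd hd2 (abs_lt.mpr ⟨by omega, by omega⟩)
  exact hh_inj hlev hp (by omega)

lemma Gh_min {n : ℤ} {p : ℤ × ℤ} (hp : lev n p) {m : ℕ} (hm : 0 < m)
    (h : Gh^[m] p = p) : 6 * n + 1 ≤ (m : ℤ) := by
  obtain ⟨hlev, hd⟩ := key hp m
  rw [h] at hd
  have heq : hh n p - (hh n p + (m : ℤ) * (4 * n + 1)) = -((m : ℤ) * (4 * n + 1)) := by ring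
  rw [heq, dvd_neg] at hd
  have hd2 : (6 * n + 1) ∣ (m : ℤ) := by
    have h3 : (m : ℤ) = 3 * ((m : ℤ) * (4 * n + 1)) - ((m : ℤ) * 2) * (6 * n + 1) := by ring
    rw [h3]
    exact dvd_sub (hd.mul_left 3) (dvd_mul_left _ _)
  exact Int.le_of_dvd (by exact_mod_cast hm) hd2

/-! ### The real map on centers -/

lemma sqrt3_sq : Real.sqrt 3 * Real.sqrt 3 = 3 := Real.mul_self_sqrt (by norm_num)

lemma sqrt3_pos : 0 < Real.sqrt 3 := Real.sqrt_pos.mpr (by norm_num)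

lemma F_qc (p : ℤ × ℤ) : F (qc p.1 p.2) = qc (Gh p).1 (Gh p).2 := by
  obtain ⟨k, l⟩ := p
  have h3 := sqrt3_sq
  have hpos := sqrt3_pos
  rcases le_or_gt 0 l with hl | hl
  · have hl' : (0 : ℝ) ≤ (l : ℝ) := by exact_mod_cast hl
    have hy : 0 ≤ Real.sqrt 3 * ((l : ℝ) + 1/6) := by nlinarith
    have hs : s (Real.sqrt 3 * ((l : ℝ) + 1/6)) = 1 := if_pos hy
    simp only [F, qc, hs, Gh, hl, if_true, if_pos hy, Prod.mk.injEq]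
    constructor
    · push_cast
      linear_combination (((l : ℝ) + 1/6) / 2) * h3
    · push_cast
      ring
  · have hl1 : l ≤ -1 := by omega
    have hl' : (l : ℝ) ≤ -1 := by exact_mod_cast hl1
    have hy : ¬ (0 ≤ Real.sqrt 3 * ((l : ℝ) + 1/6)) := by nlinarith
    have hs : s (Real.sqrt 3 * ((l : ℝ) + 1/6)) = -1 := if_neg hy
    simp only [F, qc, hs, Gh, not_le.mpr hl, if_false, if_neg hy, Prod.mk.injEq]
    constructor
    · push_cast
      linear_combination (((l : ℝ) + 1/6) / 2) * h3
    · push_cast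
      ring

lemma F_rc (p : ℤ × ℤ) : F (rc p.1 p.2) = rc (Ghr p).1 (Ghr p).2 := by
  obtain ⟨k, l⟩ := p
  have h3 := sqrt3_sq
  have hpos := sqrt3_pos
  rcases le_or_gt 0 l with hl | hl
  · have hl' : (0 : ℝ) ≤ (l : ℝ) := by exact_mod_cast hl
    have hy : 0 ≤ Real.sqrt 3 * ((l : ℝ) + 5/6) := by nlinarith
    have hs : s (Real.sqrt 3 * ((l : ℝ) + 5/6)) = 1 := if_pos hy
    simp only [F, rc, hs, Ghr, hl, if_true, if_pos hy, Prod.mk.injEq]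
    constructor
    · push_cast
      linear_combination (((l : ℝ) + 5/6) / 2) * h3
    · push_cast
      ring
  · have hl1 : l ≤ -1 := by omega
    have hl' : (l : ℝ) ≤ -1 := by exact_mod_cast hl1
    have hy : ¬ (0 ≤ Real.sqrt 3 * ((l : ℝ) + 5/6)) := by nlinarith
    have hs : s (Real.sqrt 3 * ((l : ℝ) + 5/6)) = -1 := if_neg hy
    simp only [F, rc, hs, Ghr, not_le.mpr hl, if_false, if_neg hy, Prod.mk.injEq]
    constructor
    · push_cast
      linear_combination (((l : ℝ) + 5/6) / 2) * h3
    · push_cast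
      ring

lemma qc_inj {p q : ℤ × ℤ} (h : qc p.1 p.2 = qc q.1 q.2) : p = q := by
  simp only [qc, Prod.mk.injEq] at h
  obtain ⟨h1, h2⟩ := h
  have hs : Real.sqrt 3 ≠ 0 := ne_of_gt sqrt3_pos
  have h2' : ((p.2 : ℝ) + 1/6) = ((q.2 : ℝ) + 1/6) := mul_left_cancel₀ hs h2
  have hl : (p.2 : ℝ) = (q.2 : ℝ) := by linarith
  have hl' : p.2 = q.2 := by exact_mod_cast hl
  have hk : (p.1 : ℝ) = (q.1 : ℝ) := by
    rw [hl] at h1; linarith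
  have hk' : p.1 = q.1 := by exact_mod_cast hk
  exact Prod.ext hk' hl'

lemma rc_inj {p q : ℤ × ℤ} (h : rc p.1 p.2 = rc q.1 q.2) : p = q := by
  simp only [rc, Prod.mk.injEq] at h
  obtain ⟨h1, h2⟩ := h
  have hs : Real.sqrt 3 ≠ 0 := ne_of_gt sqrt3_pos
  have h2' : ((p.2 : ℝ) + 5/6) = ((q.2 : ℝ) + 5/6) := mul_left_cancel₀ hs h2
  have hl : (p.2 : ℝ) = (q.2 : ℝ) := by linarith
  have hl' : p.2 = q.2 := by exact_mod_cast hl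
  have hk : (p.1 : ℝ) = (q.1 : ℝ) := by
    rw [hl] at h1; linarith
  have hk' : p.1 = q.1 := by exact_mod_cast hk
  exact Prod.ext hk' hl'

lemma F_iter_qc (p : ℤ × ℤ) (m : ℕ) :
    F^[m] (qc p.1 p.2) = qc (Gh^[m] p).1 (Gh^[m] p).2 := by
  induction m with
  | zero => rfl
  | succ m ih =>
    rw [Function.iterate_succ_apply', Function.iterate_succ_apply', ih, F_qc]

lemma F_iter_rc (p : ℤ × ℤ) (m : ℕ) :
    F^[m] (rc p.1 p.2) = rc (Ghr^[m] p).1 (Ghr^[m] p).2 := by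
  induction m with
  | zero => rfl
  | succ m ih =>
    rw [Function.iterate_succ_apply', Function.iterate_succ_apply', ih, F_rc]

lemma Sc_comm (p : ℤ × ℤ) : Gh (Sc p) = Sc (Ghr p) := by
  obtain ⟨k, l⟩ := p
  simp only [Gh, Ghr, Sc, Prod.mk.injEq]
  refine ⟨trivial, ?_⟩
  split_ifs <;> omega

lemma Sc_iter (p : ℤ × ℤ) (m : ℕ) : Gh^[m] (Sc p) = Sc (Ghr^[m] p) := by
  induction m with
  | zero => rfl
  | succ m ih =>
    rw [Function.iterate_succ_apply', Function.iterate_succ_apply', ih, Sc_comm]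

lemma Sc_inj {p q : ℤ × ℤ} (h : Sc p = Sc q) : p = q := by
  obtain ⟨k, l⟩ := p
  obtain ⟨k', l'⟩ := q
  simp only [Sc, Prod.mk.injEq] at *
  omega

lemma minimalPeriod_transfer (x : ℝ × ℝ) (g : ℤ × ℤ → ℤ × ℤ) (p : ℤ × ℤ) (N : ℕ)
    (hN : 0 < N) (hiff : ∀ m : ℕ, F^[m] x = x ↔ g^[m] p = p)
    (hper : g^[N] p = p) (hmin : ∀ m : ℕ, 0 < m → g^[m] p = p → N ≤ m) :
    Function.minimalPeriod F x = N := by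
  have hperF : Function.IsPeriodicPt F N x := (hiff N).mpr hper
  have hle : Function.minimalPeriod F x ≤ N := hperF.minimalPeriod_le hN
  have hpos : 0 < Function.minimalPeriod F x := hperF.minimalPeriod_pos hN
  have hmpF : F^[Function.minimalPeriod F x] x = x :=
    Function.isPeriodicPt_minimalPeriod F x
  have hge : N ≤ Function.minimalPeriod F x :=
    hmin _ hpos ((hiff _).mp hmpF)
  omega

/-- The level of each triangle center of the `α = 2π/3` tiling is an even
natural number `c`, and the center has minimal period `3c+1` under `F`. -/
theorem triangle_centers_two_pi_div_three (k ℓ : ℤ) :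
    (Even (Vt k ℓ (k + ℓ)) ∧ 0 ≤ Vt k ℓ (k + ℓ) ∧
      (Function.minimalPeriod F (qc k ℓ) : ℤ) = 3 * Vt k ℓ (k + ℓ) + 1) ∧
    (Even (Vt k ℓ (k + ℓ + 2)) ∧ 0 ≤ Vt k ℓ (k + ℓ + 2) ∧
      (Function.minimalPeriod F (rc k ℓ) : ℤ) = 3 * Vt k ℓ (k + ℓ + 2) + 1) := by
  constructor
  · -- q-centers
    set n : ℤ := nq k ℓ with hn
    have hlev : lev n (k, ℓ) := lev_nq k ℓ
    have hn0 : 0 ≤ n := nq_nonneg hlev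
    have hV : 2 * n = Vt k ℓ (k + ℓ) := nq_Vt k ℓ
    refine ⟨⟨n, by omega⟩, by omega, ?_⟩
    have hiff : ∀ m : ℕ, F^[m] (qc k ℓ) = qc k ℓ ↔ Gh^[m] (k, ℓ) = (k, ℓ) := by
      intro m
      constructor
      · intro h
        have h' := F_iter_qc (k, ℓ) m
        exact qc_inj (h'.symm.trans h)
      · intro h
        rw [F_iter_qc (k, ℓ) m, h]
    have hNpos : 0 < (6 * n + 1).toNat := by omega
    have hmp : Function.minimalPeriod F (qc k ℓ) = (6 * n + 1).toNat := by
      refine minimalPeriod_transfer _ Gh (k, ℓ) _ hNpos hiff (Gh_periodic hlev) ?_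
      intro m hm hper
      have := Gh_min hlev hm hper
      omega
    rw [hmp]
    have : (((6 * n + 1).toNat : ℕ) : ℤ) = 6 * n + 1 := Int.toNat_of_nonneg (by omega)
    omega
  · -- r-centers
    set n : ℤ := nq (-k - 1) (-ℓ - 1) with hn
    have hlev : lev n (Sc (k, ℓ)) := lev_nq (-k - 1) (-ℓ - 1)
    have hn0 : 0 ≤ n := nq_nonneg hlev
    have hV : 2 * n = Vt k ℓ (k + ℓ + 2) := nq_Vt' k ℓ
    refine ⟨⟨n, by omega⟩, by omega, ?_⟩
    have hiff : ∀ m : ℕ, F^[m] (rc k ℓ) = rc k ℓ ↔ Gh^[m] (Sc (k, ℓ)) = Sc (k, ℓ) := by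
      intro m
      constructor
      · intro h
        have h' := F_iter_rc (k, ℓ) m
        have h2 : Ghr^[m] (k, ℓ) = (k, ℓ) := rc_inj (h'.symm.trans h)
        rw [Sc_iter, h2]
      · intro h
        rw [Sc_iter] at h
        have h2 : Ghr^[m] (k, ℓ) = (k, ℓ) := Sc_inj h
        rw [F_iter_rc (k, ℓ) m, h2]
    have hNpos : 0 < (6 * n + 1).toNat := by omega
    have hmp : Function.minimalPeriod F (rc k ℓ) = (6 * n + 1).toNat := by
      refine minimalPeriod_transfer _ Gh (Sc (k, ℓ)) _ hNpos hiff (Gh_periodic hlev) ?_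
      intro m hm hper
      have := Gh_min hlev hm hper
      omega
    rw [hmp]
    have : (((6 * n + 1).toNat : ℕ) : ℤ) = 6 * n + 1 := Int.toNat_of_nonneg (by omega)
    omega
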